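/- arXiv:2005.12161 — 8 statements merged into one kernel-verified Lean document; each statement's English description precedes it below -/
import Mathlib

section
/- Let A be an n×n real symmetric negative definite matrix. If x ∈ ℝ^n is nonzero and satisfies 2Ax - (xᵀx)Ax - (xᵀAx)x = 0, then x is a unit eigenvector of A, i.e., Ax = λx for some eigenvalue λ < 0 and ‖x‖ = 1. -/
open Matrix

/-- If `A` is symmetric negative definite and a nonzero `x`
satisfies `2Ax - (xᵀx)Ax - (xᵀAx)x = 0`, then `x` is a unit eigenvector of `A`
with a negative eigenvalue. -/
theorem stmt1 {n : ℕ} (A : Matrix (Fin n) (Fin n) ℝ)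
    (hsymm : A.IsSymm)
    (hneg : ∀ v : Fin n → ℝ, v ≠ 0 → v ⬝ᵥ A.mulVec v < 0)
    (x : Fin n → ℝ) (hx : x ≠ 0)
    (hfix : (2 : ℝ) • A.mulVec x - (x ⬝ᵥ x) • A.mulVec x
        - (x ⬝ᵥ A.mulVec x) • x = 0) :
    ∃ lam : ℝ, lam < 0 ∧ A.mulVec x = lam • x ∧ x ⬝ᵥ x = 1 := by
  set μ := x ⬝ᵥ A.mulVec x with hμdef
  have hμ : μ < 0 := hneg x hx
  have h1 : x ⬝ᵥ ((2 : ℝ) • A.mulVec x - (x ⬝ᵥ x) • A.mulVec x - μ • x) = 0 := by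
    rw [hfix]; simp
  simp only [dotProduct_sub, dotProduct_smul, smul_eq_mul, ← hμdef] at h1
  have hs : x ⬝ᵥ x = 1 := by
    have h2 : μ * (2 - 2 * (x ⬝ᵥ x)) = 0 := by ring_nf; linarith [h1]
    rcases mul_eq_zero.mp h2 with h | h
    · exact absurd h (ne_of_lt hμ)
    · linarith
  refine ⟨μ, hμ, ?_, hs⟩
  have := hfix
  rw [hs] at this
  have h3 : A.mulVec x - μ • x = 0 := by
    have : (2 : ℝ) • A.mulVec x - (1 : ℝ) • A.mulVec x - μ • x = 0 := this
    simpa [two_smul, sub_sub] using this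
  linear_combination (norm := module) h3
end

section
/- Let A ∈ ℝ^{n×n} be symmetric with at least p negative eigenvalues λ₁ < λ₂ < ... (simple smallest eigenvalues), with orthonormal eigenvectors u₁,...,u_p. For X* = (√(-λ₁)d₁u₁, ..., √(-λ_p)d_p u_p) with d_i ∈ {±1}, the block J_{ii} = A + X*_i (X*_i)ᵀ + ((x*_i)ᵀx*_i) I + x*_i (x*_i)ᵀ of the Jacobian of g₁(X) = AX + X triu(XᵀX) equals A - U_iΛ_iU_iᵀ - λ_i I - λ_i u_i u_iᵀ and is symmetric positive definite for every i = 1,...,p. -/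
open Matrix Finset

/-! Since `x*_j x*_jᵀ = -λ_j u_j u_jᵀ` and `‖x*_i‖² = -λ_i`, the formula for `J_ii` is immediate.
Every term of it is diagonalised by `U`, so `J_ii = U diag(β) Uᵀ` with `β_k = -λ_i` for `k < i`,
`β_i = -2λ_i` and `β_k = λ_k - λ_i` for `k > i`; these are positive because `λ_i < 0` and
`λ_i` is strictly below the later eigenvalues. -/

namespace Matrix

lemma vecMulVec_smul_self {ι α : Type*} [CommSemiring α] (a : α) (v : ι → α) :
    vecMulVec (a • v) (a • v) = a ^ 2 • vecMulVec v v := by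
  rw [smul_vecMulVec, vecMulVec_smul, smul_smul, sq]

section

variable {ι : Type*} [Fintype ι] [DecidableEq ι] {U : Matrix ι ι ℝ}

variable (U) in
def conjDiagonal : (ι → ℝ) →ₗ[ℝ] Matrix ι ι ℝ :=
  LinearMap.mulRight ℝ Uᵀ ∘ₗ LinearMap.mulLeft ℝ U ∘ₗ diagonalLinearMap ι ℝ ℝ

lemma conjDiagonal_apply (f : ι → ℝ) : conjDiagonal U f = U * diagonal f * Uᵀ := rfl

lemma conjDiagonal_single (k : ι) :
    conjDiagonal U (Pi.single k 1) = vecMulVec (Uᵀ k) (Uᵀ k) := by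
  rw [conjDiagonal_apply, diagonal_single, single_eq_single_vecMulVec_single, mul_vecMulVec,
    vecMulVec_mul, mulVec_single_one, single_one_vecMul]
  rfl

lemma conjDiagonal_one (horth : U * Uᵀ = 1) : conjDiagonal U 1 = 1 := by
  simp [conjDiagonal_apply, horth]

lemma posDef_conjDiagonal (horth : U * Uᵀ = 1) {f : ι → ℝ} (hf : ∀ k, 0 < f k) :
    (conjDiagonal U f).PosDef := by
  have hinj : Function.Injective U.vecMul :=
    Function.LeftInverse.injective (g := (· ᵥ* Uᵀ)) fun x => by
      simp only [vecMul_vecMul, horth, vecMul_one]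
  simpa [conjDiagonal_apply, conjTranspose_eq_transpose_of_trivial] using
    (PosDef.diagonal hf).mul_mul_conjTranspose_same hinj

lemma transpose_dotProduct_self_eq_one (horth : U * Uᵀ = 1) (k : ι) : Uᵀ k ⬝ᵥ Uᵀ k = 1 := by
  calc Uᵀ k ⬝ᵥ Uᵀ k = (Uᵀ * U) k k := (mul_apply' ..).symm
    _ = 1 := by rw [mul_eq_one_comm.mp horth, one_apply_eq]

end

section

variable {ι : Type*} [Fintype ι] [LinearOrder ι] {U : Matrix ι ι ℝ}

theorem posDef_spectral_deflation (horth : U * Uᵀ = 1) {ev : ι → ℝ} {m : ι}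
    (hm : ev m < 0) (hgap : ∀ l, m < l → ev m < ev l) :
    (U * diagonal ev * Uᵀ - ∑ k ∈ univ.filter (· ≤ m), ev k • vecMulVec (Uᵀ k) (Uᵀ k)
      - ev m • 1 - ev m • vecMulVec (Uᵀ m) (Uᵀ m)).PosDef := by
  have hconj : U * diagonal ev * Uᵀ - ∑ k ∈ univ.filter (· ≤ m), ev k • vecMulVec (Uᵀ k) (Uᵀ k)
      - ev m • 1 - ev m • vecMulVec (Uᵀ m) (Uᵀ m) = conjDiagonal U
        (ev - ∑ k ∈ univ.filter (· ≤ m), ev k • Pi.single k 1 - ev m • 1 - ev m • Pi.single m 1) := by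
    simp only [map_sub, map_sum, map_smul, conjDiagonal_single, conjDiagonal_one horth]
    rw [conjDiagonal_apply]
  rw [hconj]
  refine posDef_conjDiagonal horth fun l => ?_
  simp only [Pi.sub_apply, Finset.sum_apply, Pi.smul_apply, Pi.single_apply, smul_eq_mul, mul_ite,
    mul_one, mul_zero, sum_ite_eq, mem_filter, mem_univ, true_and, Pi.one_apply, sub_pos]
  rcases lt_trichotomy l m with hlt | rfl | hgt
  · simp only [hlt.ne, hlt.le, if_true, if_false]
    linarith
  · simp only [le_refl, if_true]
    linarith
  · simp only [hgt.ne', hgt.not_ge, if_false]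
    linarith [hgap l hgt]

end

end Matrix

lemma sq_mul_sqrt_of_sign {d e : ℝ} (hd : d = 1 ∨ d = -1) (he : 0 ≤ e) : (d * √e) ^ 2 = e := by
  rcases hd with rfl | rfl <;> simp [Real.sq_sqrt he]

lemma Fin.sum_filter_le_castLE {M : Type*} [AddCommMonoid M] {p n : ℕ} (h : p ≤ n) (i : Fin p)
    (g : Fin n → M) :
    ∑ j ∈ univ.filter (· ≤ i), g (Fin.castLE h j) = ∑ k ∈ univ.filter (· ≤ Fin.castLE h i), g k := by
  refine Finset.sum_bij (fun j _ => Fin.castLE h j) (fun j hj => ?_)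
    (fun _ _ _ _ hj => Fin.castLE_injective h hj) (fun k hk => ?_) (fun _ _ => rfl)
  · simpa using hj
  · have hk : k ≤ Fin.castLE h i := by simpa using hk
    exact ⟨⟨k, Nat.lt_of_le_of_lt hk i.isLt⟩, (mem_filter_univ _).2 hk, rfl⟩

theorem stmt3_general {n p : ℕ} (hpn : p ≤ n) (A U : Matrix (Fin n) (Fin n) ℝ)
    (ev : Fin n → ℝ)
    (hdecomp : A = U * Matrix.diagonal ev * Uᵀ)
    (horth : U * Uᵀ = 1)
    (hsimple : ∀ i j : Fin n, (i : ℕ) < p → i < j → ev i < ev j)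
    (hneg : ∀ i : Fin n, (i : ℕ) < p → ev i < 0)
    (d : Fin p → ℝ) (hd : ∀ i, d i = 1 ∨ d i = -1) :
    ∀ i : Fin p,
      let c : Fin p → Fin n := Fin.castLE hpn
      let u : Fin n → Fin n → ℝ := fun k j => U j k
      let xs : Fin p → Fin n → ℝ := fun k => (d k * Real.sqrt (-(ev (c k)))) • u (c k)
      let J : Matrix (Fin n) (Fin n) ℝ :=
        A + (∑ j ∈ Finset.univ.filter (· ≤ i), vecMulVec (xs j) (xs j))
          + (xs i ⬝ᵥ xs i) • (1 : Matrix (Fin n) (Fin n) ℝ)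
          + vecMulVec (xs i) (xs i)
      J = A - (∑ j ∈ Finset.univ.filter (· ≤ i),
              ev (c j) • vecMulVec (u (c j)) (u (c j)))
          - ev (c i) • (1 : Matrix (Fin n) (Fin n) ℝ)
          - ev (c i) • vecMulVec (u (c i)) (u (c i))
        ∧ J.PosDef := by
  intro i c u xs J
  have hsq (j : Fin p) : (d j * √(-ev (c j))) ^ 2 = -ev (c j) :=
    sq_mul_sqrt_of_sign (hd j) (neg_nonneg.2 (hneg _ j.isLt).le)
  have hrank (j : Fin p) : vecMulVec (xs j) (xs j) = -ev (c j) • vecMulVec (u (c j)) (u (c j)) := by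
    rw [← hsq j]
    exact vecMulVec_smul_self _ _
  have hnorm : xs i ⬝ᵥ xs i = -ev (c i) := by
    have hu : u (c i) ⬝ᵥ u (c i) = 1 := transpose_dotProduct_self_eq_one horth _
    rw [← hsq i]
    simp only [xs, smul_dotProduct, dotProduct_smul, hu, smul_eq_mul]
    ring
  suffices hJ : J = _ from ⟨hJ, by
    rw [hJ, hdecomp, Fin.sum_filter_le_castLE hpn i fun k => ev k • vecMulVec (u k) (u k)]
    exact posDef_spectral_deflation horth (hneg _ i.isLt) fun l hl => hsimple _ _ i.isLt hl⟩
  simp only [J, hrank, hnorm, neg_smul, sum_neg_distrib]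
  abel

/-- at the stable fixed points `X* = U_p √(-Λ_p) D` of
TriOFM-(Obj1), the diagonal Jacobian blocks
`J_ii = A + X*_i(X*_i)ᵀ + (x*_iᵀx*_i)I + x*_i(x*_i)ᵀ`
equal `A - U_iΛ_iU_iᵀ - λ_i I - λ_i u_iu_iᵀ` and are symmetric positive
definite. -/
theorem stmt3 {n p : ℕ} (hpn : p ≤ n) (A U : Matrix (Fin n) (Fin n) ℝ)
    (ev : Fin n → ℝ)
    (hsymm : A.IsSymm)
    (hdecomp : A = U * Matrix.diagonal ev * Uᵀ)
    (horth : U * Uᵀ = 1)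
    (hmono : Monotone ev)
    (hsimple : ∀ i j : Fin n, (i : ℕ) < p → i < j → ev i < ev j)
    (hneg : ∀ i : Fin n, (i : ℕ) < p → ev i < 0)
    (d : Fin p → ℝ) (hd : ∀ i, d i = 1 ∨ d i = -1) :
    ∀ i : Fin p,
      let c : Fin p → Fin n := Fin.castLE hpn
      let u : Fin n → Fin n → ℝ := fun k j => U j k
      let xs : Fin p → Fin n → ℝ := fun k => (d k * Real.sqrt (-(ev (c k)))) • u (c k)
      let J : Matrix (Fin n) (Fin n) ℝ :=
        A + (∑ j ∈ Finset.univ.filter (· ≤ i), vecMulVec (xs j) (xs j))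
          + (xs i ⬝ᵥ xs i) • (1 : Matrix (Fin n) (Fin n) ℝ)
          + vecMulVec (xs i) (xs i)
      J = A - (∑ j ∈ Finset.univ.filter (· ≤ i),
              ev (c j) • vecMulVec (u (c j)) (u (c j)))
          - ev (c i) • (1 : Matrix (Fin n) (Fin n) ℝ)
          - ev (c i) • vecMulVec (u (c i)) (u (c i))
        ∧ J.PosDef :=
  stmt3_general hpn A U ev hdecomp horth hsimple hneg d hd
end

section
/- With ε = x - v₁ as above, one step of x̃ = x - α(Ax + (xᵀx)x) satisfies the exact identity x̃ - v₁ = ((1+αλ₁)I - αA - 2α v₁v₁ᵀ)ε - α v₁‖ε‖² - 2α(v₁ᵀε)ε - α‖ε‖²ε, where v₁ = √(-λ₁)u₁ so that v₁ᵀv₁ = -λ₁ and Av₁ = λ₁v₁. -/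
open Matrix

lemma vecMulVec_mulVec' {n : ℕ} (w v u : Fin n → ℝ) :
    (vecMulVec w v).mulVec u = (v ⬝ᵥ u) • w := by
  funext i
  simp [mulVec, vecMulVec_apply, dotProduct, Finset.mul_sum, mul_assoc, mul_comm, mul_left_comm]

/-- the exact error expansion for one step of the iteration
`x̃ = x - α(Ax + (xᵀx)x)` around `v₁ = √(-λ₁)u₁`:
`x̃ - v₁ = ((1+αλ₁)I - αA - 2αv₁v₁ᵀ)ε - αv₁‖ε‖² - 2α(v₁ᵀε)ε - α‖ε‖²ε`
with `ε = x - v₁`, where `‖ε‖² = ε ⬝ᵥ ε`. -/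
theorem stmt9 {n : ℕ} (A : Matrix (Fin n) (Fin n) ℝ)
    (hsymm : A.IsSymm)
    (lam1 : ℝ) (u1 : Fin n → ℝ)
    (heig : A.mulVec u1 = lam1 • u1) (hu1 : u1 ⬝ᵥ u1 = 1)
    (hlam1 : lam1 < 0)
    (α : ℝ) (x : Fin n → ℝ) :
    let v1 : Fin n → ℝ := Real.sqrt (-lam1) • u1
    let ε : Fin n → ℝ := x - v1
    (x - α • (A.mulVec x + (x ⬝ᵥ x) • x)) - v1
      = ((1 + α * lam1) • (1 : Matrix (Fin n) (Fin n) ℝ) - α • A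
          - (2 * α) • vecMulVec v1 v1).mulVec ε
        - (α * (ε ⬝ᵥ ε)) • v1 - (2 * α * (v1 ⬝ᵥ ε)) • ε - (α * (ε ⬝ᵥ ε)) • ε := by
  intro v1 ε
  have hεx : x = v1 + ε := by simp [ε]
  have hv1 : A.mulVec v1 = lam1 • v1 := by
    simp [v1, mulVec_smul, heig, smul_smul, mul_comm]
  have hvv : v1 ⬝ᵥ v1 = -lam1 := by
    simp [v1, smul_dotProduct, dotProduct_smul, hu1,
      Real.mul_self_sqrt (by linarith : (0:ℝ) ≤ -lam1)]
  have hcomm : ε ⬝ᵥ v1 = v1 ⬝ᵥ ε := dotProduct_comm _ _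
  rw [hεx]
  simp only [mulVec_add, mulVec_smul, sub_mulVec, add_mulVec, smul_mulVec,
    add_dotProduct, dotProduct_add, hv1, hvv, hcomm, vecMulVec_mulVec', one_mulVec]
  set d := v1 ⬝ᵥ ε
  set e := ε ⬝ᵥ ε
  module
end

section
/- Let A be symmetric with simple negative eigenvalues λ₁ < ... < λ_{p+1} < 0 among its smallest, ρ = ‖A‖₂, and let X* be the stable fixed point with columns x*_j = √(-λ_j)d_j u_j. Fix 0 < α < min_j min{1/(4ρ), 1/(λ_{j+1}-λ_j)}. Suppose at some iteration the errors ε_j = x_j - x*_j satisfy ‖ε_j‖ ≤ (λ_{j+1}-λ_j)/(8√(-λ_j)) for all j ≤ i. Then after one step of the iteration x̃_i = x_i - α(Ax_i + Σ_{j≤i} x_j x_jᵀ x_i), the new error satisfies ‖x̃_i - x*_i‖ ≤ (1 - α(λ_{i+1}-λ_i)/2)‖ε_i‖ + α Σ_{j<i} (2‖A‖²/√(λ_jλ_i)) ‖ε_j‖. -/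
/-!
Write `x_j = x*_j + ε_j`. Because `x*_i` is a fixed point of the `i`-th column map and is orthogonal
to the earlier columns, the new error is `(I - αJ) ε_i` minus `α` times terms of second order, where
`J = A + ‖x*_i‖² I + 2 x*_i x*_iᵀ + Σ_{j<i} x*_j x*_jᵀ` is the partial Jacobian in `x_i`.
`J` is symmetric with eigenvectors `u_k` for the eigenvalues `-λ_i` (`k < i`), `-2λ_i` (`k = i`)
and `λ_k - λ_i` (`k > i`), and on the orthogonal complement of the `u_k` it acts as `A - λ_i`,
whose Rayleigh quotients lie in `[λ_{p+1} - λ_i, 2ρ]`, the lower end by the Courant bound. Hence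
`λ_{i+1} - λ_i ≤ J ≤ 2ρ`, and since `αρ` is small, `‖I - αJ‖ ≤ 1 - α(λ_{i+1} - λ_i)`.
The smallness of the `ε_j` makes the quadratic remainder at most half the gap times `‖ε_i‖`, and
each cross term with an earlier column at most `2ρ² / √(λ_j λ_i) ‖ε_j‖`.
-/

open Matrix Finset
open scoped Matrix.Norms.L2Operator

/-- Euclidean norm of a vector in `ℝⁿ`. -/
noncomputable def vecEnorm {n : ℕ} (x : Fin n → ℝ) : ℝ := Real.sqrt (x ⬝ᵥ x)

section VecEnorm

variable {n : ℕ}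

theorem vecEnorm_eq_norm (x : Fin n → ℝ) : vecEnorm x = ‖WithLp.toLp 2 x‖ := by
  rw [vecEnorm, EuclideanSpace.norm_eq, dotProduct]
  simp [sq]

theorem vecEnorm_nonneg (x : Fin n → ℝ) : 0 ≤ vecEnorm x := Real.sqrt_nonneg _

theorem vecEnorm_mul_self (x : Fin n → ℝ) : vecEnorm x * vecEnorm x = x ⬝ᵥ x :=
  Real.mul_self_sqrt (by simpa [dotProduct] using sum_nonneg fun i _ => mul_self_nonneg (x i))

theorem vecEnorm_smul (c : ℝ) (x : Fin n → ℝ) : vecEnorm (c • x) = |c| * vecEnorm x := by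
  simp [vecEnorm_eq_norm, norm_smul]

theorem vecEnorm_add_le (x y : Fin n → ℝ) : vecEnorm (x + y) ≤ vecEnorm x + vecEnorm y := by
  simpa [vecEnorm_eq_norm] using norm_add_le (WithLp.toLp 2 x) (WithLp.toLp 2 y)

theorem vecEnorm_sub_le (x y : Fin n → ℝ) : vecEnorm (x - y) ≤ vecEnorm x + vecEnorm y := by
  simpa [vecEnorm_eq_norm] using norm_sub_le (WithLp.toLp 2 x) (WithLp.toLp 2 y)

theorem vecEnorm_sum_le {ι : Type*} (s : Finset ι) (f : ι → Fin n → ℝ) :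
    vecEnorm (∑ j ∈ s, f j) ≤ ∑ j ∈ s, vecEnorm (f j) := by
  simpa [vecEnorm_eq_norm] using norm_sum_le s fun j => WithLp.toLp 2 (f j)

theorem abs_dotProduct_le_vecEnorm_mul (x y : Fin n → ℝ) :
    |x ⬝ᵥ y| ≤ vecEnorm x * vecEnorm y := by
  simpa [vecEnorm_eq_norm, EuclideanSpace.inner_eq_star_dotProduct, dotProduct_comm] using
    abs_real_inner_le_norm (WithLp.toLp 2 x) (WithLp.toLp 2 y)

theorem vecEnorm_mulVec_le (A : Matrix (Fin n) (Fin n) ℝ) (x : Fin n → ℝ) :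
    vecEnorm (A *ᵥ x) ≤ ‖A‖ * vecEnorm x := by
  simpa [vecEnorm_eq_norm] using A.l2_opNorm_mulVec (WithLp.toLp 2 x)

theorem vecEnorm_sub_smul_add_sum_le {ι : Type*} (v q : Fin n → ℝ) (s : Finset ι)
    (r : ι → Fin n → ℝ) {α : ℝ} (hα : 0 ≤ α) :
    vecEnorm (v - α • (q + ∑ j ∈ s, r j))
      ≤ vecEnorm v + α * (vecEnorm q + ∑ j ∈ s, vecEnorm (r j)) := by
  refine (vecEnorm_sub_le _ _).trans (add_le_add_right ?_ _)
  rw [vecEnorm_smul, abs_of_nonneg hα]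
  exact mul_le_mul_of_nonneg_left ((vecEnorm_add_le _ _).trans
    (add_le_add_right (vecEnorm_sum_le _ _) _)) hα

end VecEnorm

theorem Matrix.IsSymm.dotProduct_mulVec_comm {n : ℕ} {S : Matrix (Fin n) (Fin n) ℝ}
    (hS : S.IsSymm) (x y : Fin n → ℝ) : x ⬝ᵥ S *ᵥ y = S *ᵥ x ⬝ᵥ y := by
  rw [dotProduct_mulVec, ← vecMul_transpose, hS.eq]

theorem Matrix.IsSymm.l2_opNorm_le_of_abs_dotProduct_mulVec_le {m : Type*} [Fintype m]
    [DecidableEq m] {S : Matrix m m ℝ} (hS : S.IsSymm) {c : ℝ} (hc : 0 ≤ c)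
    (h : ∀ x, |x ⬝ᵥ S *ᵥ x| ≤ c * (x ⬝ᵥ x)) : ‖S‖ ≤ c := by
  have hT : (toEuclideanCLM (n := m) (𝕜 := ℝ) S).IsSymmetric :=
    isSymmetric_toEuclideanLin_iff.mpr hS
  rw [cstar_norm_def, ContinuousLinearMap.norm_eq_iSup_rayleighQuotient _ hT]
  refine ciSup_le fun x => ?_
  rcases eq_or_ne x 0 with rfl | hx
  · simpa using hc
  have hx2 : 0 < ‖x‖ ^ 2 := by positivity
  rw [abs_div, abs_of_pos hx2, div_le_iff₀ hx2, ContinuousLinearMap.reApplyInnerSelf_apply,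
    ← real_inner_self_eq_norm_sq, RCLike.re_to_real, real_inner_comm, inner_toEuclideanCLM]
  simpa only [EuclideanSpace.inner_eq_star_dotProduct, star_trivial] using h x.ofLp

theorem abs_le_l2_opNorm_of_mulVec_eq_smul {n : ℕ} {A : Matrix (Fin n) (Fin n) ℝ} {t : ℝ}
    {v : Fin n → ℝ} (hv : A *ᵥ v = t • v) (hv1 : v ⬝ᵥ v = 1) : |t| ≤ ‖A‖ := by
  have hnorm : vecEnorm v = 1 := by rw [vecEnorm, hv1, Real.sqrt_one]
  simpa [hv, vecEnorm_smul, hnorm] using vecEnorm_mulVec_le A v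

theorem dotProduct_mulVec_le_l2_opNorm_mul {n : ℕ} (A : Matrix (Fin n) (Fin n) ℝ)
    (x : Fin n → ℝ) : x ⬝ᵥ A *ᵥ x ≤ ‖A‖ * (x ⬝ᵥ x) := by
  rw [← vecEnorm_mul_self]
  calc x ⬝ᵥ A *ᵥ x ≤ vecEnorm x * vecEnorm (A *ᵥ x) :=
        (le_abs_self _).trans (abs_dotProduct_le_vecEnorm_mul _ _)
    _ ≤ vecEnorm x * (‖A‖ * vecEnorm x) :=
        mul_le_mul_of_nonneg_left (vecEnorm_mulVec_le A x) (vecEnorm_nonneg x)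
    _ = ‖A‖ * (vecEnorm x * vecEnorm x) := by ring

theorem vecEnorm_one_sub_smul_mulVec_le {n : ℕ} {J : Matrix (Fin n) (Fin n) ℝ} (hJ : J.IsSymm)
    {m M α : ℝ} (hJmM : ∀ e, e ⬝ᵥ J *ᵥ e ∈ Set.Icc (m * (e ⬝ᵥ e)) (M * (e ⬝ᵥ e)))
    (hα : 0 ≤ α) (hαm : α * m ≤ 1) (hαmM : α * (m + M) ≤ 2) (e : Fin n → ℝ) :
    vecEnorm ((1 - α • J) *ᵥ e) ≤ (1 - α * m) * vecEnorm e := by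
  have hS : (1 - α • J).IsSymm := isSymm_one.sub (hJ.smul α)
  have hform : ∀ x, |x ⬝ᵥ (1 - α • J) *ᵥ x| ≤ (1 - α * m) * (x ⬝ᵥ x) := fun x => by
    have hxx : 0 ≤ x ⬝ᵥ x := by rw [← vecEnorm_mul_self]; exact mul_self_nonneg _
    rw [sub_mulVec, one_mulVec, smul_mulVec, dotProduct_sub, dotProduct_smul, smul_eq_mul, abs_le]
    constructor <;> nlinarith [(hJmM x).1, (hJmM x).2]
  exact (vecEnorm_mulVec_le _ e).trans (mul_le_mul_of_nonneg_right
    (hS.l2_opNorm_le_of_abs_dotProduct_mulVec_le (by linarith) hform) (vecEnorm_nonneg e))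

section OrthonormalDecomposition

variable {n : ℕ} {ι : Type*} [Fintype ι] [DecidableEq ι] {u : ι → Fin n → ℝ}

theorem dotProduct_sum_orthonormal (hu : ∀ j k, u j ⬝ᵥ u k = if j = k then 1 else 0)
    (c : ι → ℝ) (k : ι) : u k ⬝ᵥ ∑ j, c j • u j = c k := by
  simp [dotProduct_sum, dotProduct_smul, hu]

theorem dotProduct_sub_sum_orthonormal (hu : ∀ j k, u j ⬝ᵥ u k = if j = k then 1 else 0)
    (e : Fin n → ℝ) (k : ι) : u k ⬝ᵥ (e - ∑ j, (u j ⬝ᵥ e) • u j) = 0 := by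
  rw [dotProduct_sub, dotProduct_sum_orthonormal hu, sub_self]

theorem dotProduct_mulVec_eq_sum_add_of_eigenvectors {S : Matrix (Fin n) (Fin n) ℝ}
    (hS : S.IsSymm) (hu : ∀ j k, u j ⬝ᵥ u k = if j = k then 1 else 0) {s : ι → ℝ}
    (heig : ∀ k, S *ᵥ u k = s k • u k) (e : Fin n → ℝ) :
    e ⬝ᵥ S *ᵥ e = ∑ k, s k * (u k ⬝ᵥ e) ^ 2
      + (e - ∑ k, (u k ⬝ᵥ e) • u k) ⬝ᵥ S *ᵥ (e - ∑ k, (u k ⬝ᵥ e) • u k) := by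
  set P := ∑ k, (u k ⬝ᵥ e) • u k
  set w := e - P
  have hSP : S *ᵥ P = ∑ k, (s k * (u k ⬝ᵥ e)) • u k := by
    simp only [P, mulVec_sum, mulVec_smul, heig, smul_smul]
    simp only [mul_comm]
  have hw : ∀ k, u k ⬝ᵥ w = 0 := dotProduct_sub_sum_orthonormal hu e
  have hSPw : S *ᵥ P ⬝ᵥ w = 0 := by
    simp only [hSP, sum_dotProduct, smul_dotProduct, hw, smul_zero, sum_const_zero]
  have hPSP : P ⬝ᵥ S *ᵥ P = ∑ k, s k * (u k ⬝ᵥ e) ^ 2 := by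
    rw [hSP, dotProduct_sum]
    refine sum_congr rfl fun k _ => ?_
    rw [dotProduct_smul, dotProduct_comm P, dotProduct_sum_orthonormal hu, smul_eq_mul]
    ring
  have he : e = P + w := (add_sub_cancel P e).symm
  calc e ⬝ᵥ S *ᵥ e = (P + w) ⬝ᵥ S *ᵥ (P + w) := by rw [← he]
    _ = P ⬝ᵥ S *ᵥ P + w ⬝ᵥ S *ᵥ w := by
      rw [mulVec_add, dotProduct_add, add_dotProduct, add_dotProduct, dotProduct_comm w (S *ᵥ P),
        hS.dotProduct_mulVec_comm P w, hSPw]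
      ring
    _ = _ := by rw [hPSP]

theorem dotProduct_mulVec_mem_Icc_of_eigenvectors {S : Matrix (Fin n) (Fin n) ℝ}
    (hS : S.IsSymm) (hu : ∀ j k, u j ⬝ᵥ u k = if j = k then 1 else 0) {m M : ℝ}
    (heig : ∀ k, ∃ s ∈ Set.Icc m M, S *ᵥ u k = s • u k)
    (hperp : ∀ w, (∀ k, u k ⬝ᵥ w = 0) → w ⬝ᵥ S *ᵥ w ∈ Set.Icc (m * (w ⬝ᵥ w)) (M * (w ⬝ᵥ w)))
    (e : Fin n → ℝ) : e ⬝ᵥ S *ᵥ e ∈ Set.Icc (m * (e ⬝ᵥ e)) (M * (e ⬝ᵥ e)) := by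
  choose s hsIcc hs using heig
  set w := e - ∑ k, (u k ⬝ᵥ e) • u k
  have hSe := dotProduct_mulVec_eq_sum_add_of_eigenvectors hS hu hs e
  have hscale : ∀ t : ℝ, t * (e ⬝ᵥ e) = ∑ k, t * (u k ⬝ᵥ e) ^ 2 + t * (w ⬝ᵥ w) := fun t => by
    have := dotProduct_mulVec_eq_sum_add_of_eigenvectors isSymm_one hu
      (s := fun _ => 1) (by simp) e
    simp only [one_mulVec, one_mul] at this
    rw [this, mul_add, mul_sum]
  obtain ⟨hwm, hwM⟩ := hperp w (dotProduct_sub_sum_orthonormal hu e)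
  rw [hSe, hscale m, hscale M]
  exact ⟨add_le_add (sum_le_sum fun k _ => by nlinarith [(hsIcc k).1, sq_nonneg (u k ⬝ᵥ e)]) hwm,
    add_le_add (sum_le_sum fun k _ => by nlinarith [(hsIcc k).2, sq_nonneg (u k ⬝ᵥ e)]) hwM⟩

end OrthonormalDecomposition

section Triofm

variable {n p : ℕ}

def triofmJacobian (A : Matrix (Fin n) (Fin n) ℝ) (xs : Fin p → Fin n → ℝ) (i : Fin p) :
    Matrix (Fin n) (Fin n) ℝ :=
  A + (xs i ⬝ᵥ xs i) • 1 + (2 : ℝ) • vecMulVec (xs i) (xs i)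
    + ∑ j ∈ univ.filter (· < i), vecMulVec (xs j) (xs j)

def quadRemainder (b f : Fin n → ℝ) : Fin n → ℝ :=
  (2 * (b ⬝ᵥ f)) • f + (f ⬝ᵥ f) • (b + f)

def crossRemainder (a e y : Fin n → ℝ) : Fin n → ℝ :=
  ((a + e) ⬝ᵥ y) • e + (e ⬝ᵥ y) • a

theorem triofmJacobian_mulVec (A : Matrix (Fin n) (Fin n) ℝ) (xs : Fin p → Fin n → ℝ) (i : Fin p)
    (v : Fin n → ℝ) :
    triofmJacobian A xs i *ᵥ v = A *ᵥ v + (xs i ⬝ᵥ xs i) • v + (2 * (xs i ⬝ᵥ v)) • xs i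
      + ∑ j ∈ univ.filter (· < i), (xs j ⬝ᵥ v) • xs j := by
  simp [triofmJacobian, add_mulVec, smul_mulVec, sum_mulVec, vecMulVec_mulVec, smul_smul]

theorem triofmJacobian_isSymm {A : Matrix (Fin n) (Fin n) ℝ} (hA : A.IsSymm)
    (xs : Fin p → Fin n → ℝ) (i : Fin p) : (triofmJacobian A xs i).IsSymm := by
  simp only [triofmJacobian, IsSymm, transpose_add, transpose_smul, transpose_one,
    transpose_sum, transpose_vecMulVec, hA.eq]

theorem sum_filter_le_eq_add_sum_filter_lt {M : Type*} [AddCommMonoid M] (i : Fin p)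
    (f : Fin p → M) :
    ∑ j ∈ univ.filter (· ≤ i), f j = f i + ∑ j ∈ univ.filter (· < i), f j := by
  rw [← sum_insert (by simp)]
  congr 1
  ext j
  simp [le_iff_lt_or_eq, or_comm]

theorem triofmStep_sub_eq (A : Matrix (Fin n) (Fin n) ℝ) (α : ℝ) (xs x : Fin p → Fin n → ℝ)
    (i : Fin p) (hfix : A *ᵥ xs i = -(xs i ⬝ᵥ xs i) • xs i)
    (horth : ∀ j < i, xs j ⬝ᵥ xs i = 0) :
    x i - α • (A *ᵥ x i + ∑ j ∈ univ.filter (· ≤ i), (x j ⬝ᵥ x i) • x j) - xs i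
      = (1 - α • triofmJacobian A xs i) *ᵥ (x i - xs i)
        - α • (quadRemainder (xs i) (x i - xs i)
          + ∑ j ∈ univ.filter (· < i), crossRemainder (xs j) (x j - xs j) (x i)) := by
  obtain ⟨ε, rfl⟩ : ∃ ε, x = xs + ε := ⟨x - xs, by abel⟩
  have hcross : ∀ j ∈ univ.filter (· < i), ((xs + ε) j ⬝ᵥ (xs + ε) i) • (xs + ε) j
      = (xs j ⬝ᵥ ε i) • xs j + crossRemainder (xs j) ((xs + ε) j - xs j) ((xs + ε) i) := by
    intro j hj
    simp only [Pi.add_apply, add_sub_cancel_left, crossRemainder]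
    rw [add_dotProduct (xs j), dotProduct_add (xs j), horth j (by simpa using hj), zero_add]
    module
  rw [sum_filter_le_eq_add_sum_filter_lt, sum_congr rfl hcross, sum_add_distrib, sub_mulVec,
    one_mulVec, smul_mulVec, triofmJacobian_mulVec]
  simp only [Pi.add_apply, add_sub_cancel_left, quadRemainder, mulVec_add, hfix, add_dotProduct,
    dotProduct_add, dotProduct_comm (ε i) (xs i)]
  module

end Triofm

section Remainders

variable {n : ℕ}

theorem vecEnorm_quadRemainder_le {b f : Fin n → ℝ} {s : ℝ} (hb : vecEnorm b = s)
    (hf : vecEnorm f ≤ s / 8) : vecEnorm (quadRemainder b f) ≤ 4 * s * vecEnorm f ^ 2 := by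
  have hδ := vecEnorm_nonneg f
  have hbf : |b ⬝ᵥ f| ≤ s * vecEnorm f := hb ▸ abs_dotProduct_le_vecEnorm_mul b f
  have hff : |f ⬝ᵥ f| = vecEnorm f ^ 2 := by
    rw [← vecEnorm_mul_self, abs_mul_self, sq]
  calc vecEnorm (quadRemainder b f)
      ≤ |2 * (b ⬝ᵥ f)| * vecEnorm f + |f ⬝ᵥ f| * (s + vecEnorm f) := by
        refine (vecEnorm_add_le _ _).trans ?_
        rw [vecEnorm_smul, vecEnorm_smul, ← hb]
        gcongr
        exact vecEnorm_add_le b f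
    _ ≤ 4 * s * vecEnorm f ^ 2 := by
        rw [abs_mul, abs_two, hff]
        nlinarith [mul_le_mul_of_nonneg_left hbf (by norm_num : (0 : ℝ) ≤ 2)]

theorem vecEnorm_crossRemainder_le {a b e y : Fin n → ℝ} {s t : ℝ} (hab : a ⬝ᵥ b = 0)
    (ha : vecEnorm a = s) (hb : vecEnorm b = t) (he : vecEnorm e ≤ s / 8)
    (hy : vecEnorm (y - b) ≤ t / 8) :
    vecEnorm (crossRemainder a e y) ≤ 2 * s * t * vecEnorm e := by
  have hs : 0 ≤ s := ha ▸ vecEnorm_nonneg a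
  have ht : 0 ≤ t := hb ▸ vecEnorm_nonneg b
  have hδ := vecEnorm_nonneg e
  have hynorm : vecEnorm y ≤ 9 / 8 * t := by
    have := vecEnorm_add_le (y - b) b
    rw [sub_add_cancel, hb] at this
    linarith
  have hey : |e ⬝ᵥ y| ≤ vecEnorm e * (9 / 8 * t) :=
    (abs_dotProduct_le_vecEnorm_mul e y).trans (mul_le_mul_of_nonneg_left hynorm hδ)
  have hay : |a ⬝ᵥ (y - b)| ≤ s * (t / 8) :=
    ha ▸ (abs_dotProduct_le_vecEnorm_mul a _).trans
      (mul_le_mul_of_nonneg_left hy (vecEnorm_nonneg a))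
  have hsplit : (a + e) ⬝ᵥ y = a ⬝ᵥ (y - b) + e ⬝ᵥ y := by
    rw [add_dotProduct, dotProduct_sub, hab, sub_zero]
  calc vecEnorm (crossRemainder a e y)
      ≤ (|a ⬝ᵥ (y - b)| + |e ⬝ᵥ y|) * vecEnorm e + |e ⬝ᵥ y| * s := by
        refine (vecEnorm_add_le _ _).trans ?_
        rw [vecEnorm_smul, vecEnorm_smul, ha, hsplit]
        gcongr
        exact abs_add_le _ _
    _ ≤ 2 * s * t * vecEnorm e := by
        have hey' : |e ⬝ᵥ y| ≤ 9 / 64 * s * t :=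
          hey.trans (by nlinarith [mul_le_mul_of_nonneg_right he ht])
        nlinarith [mul_le_mul_of_nonneg_right hey hs, mul_le_mul_of_nonneg_right hay hδ,
          mul_le_mul_of_nonneg_right hey' hδ, mul_nonneg (mul_nonneg hs ht) hδ]

theorem le_sqrt_neg_div_eight_of_le {δ l l' : ℝ} (hl : l < 0) (hl' : l' ≤ 0)
    (hδ : δ ≤ (l' - l) / (8 * √(-l))) : δ ≤ √(-l) / 8 :=
  calc δ ≤ (l' - l) / (8 * √(-l)) := hδ
    _ ≤ √(-l) ^ 2 / (8 * √(-l)) := by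
        rw [Real.sq_sqrt (by linarith)]
        gcongr
        linarith
    _ = √(-l) / 8 := by field_simp

theorem vecEnorm_quadRemainder_le_gap {b f : Fin n → ℝ} {l l' : ℝ} (hl : l < 0)
    (hl' : l' ≤ 0) (hb : vecEnorm b = √(-l)) (hf : vecEnorm f ≤ (l' - l) / (8 * √(-l))) :
    vecEnorm (quadRemainder b f) ≤ (l' - l) / 2 * vecEnorm f := by
  have hf8 : vecEnorm f * (8 * √(-l)) ≤ l' - l :=
    (le_div_iff₀ (by simpa using Real.sqrt_pos.mpr (neg_pos.mpr hl))).mp hf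
  refine (vecEnorm_quadRemainder_le hb (le_sqrt_neg_div_eight_of_le hl hl' hf)).trans ?_
  nlinarith [vecEnorm_nonneg f]

theorem vecEnorm_crossRemainder_le_of_neg {a b e y : Fin n → ℝ} {l m ρ : ℝ} (hl : l < 0)
    (hm : m < 0) (hlρ : -l ≤ ρ) (hmρ : -m ≤ ρ) (hab : a ⬝ᵥ b = 0) (ha : vecEnorm a = √(-l))
    (hb : vecEnorm b = √(-m)) (he : vecEnorm e ≤ √(-l) / 8) (hy : vecEnorm (y - b) ≤ √(-m) / 8) :
    vecEnorm (crossRemainder a e y) ≤ 2 * ρ ^ 2 / √(l * m) * vecEnorm e := by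
  refine (vecEnorm_crossRemainder_le hab ha hb he hy).trans
    (mul_le_mul_of_nonneg_right ?_ (vecEnorm_nonneg e))
  have hsl := Real.sqrt_pos.mpr (neg_pos.mpr hl)
  have hsm := Real.sqrt_pos.mpr (neg_pos.mpr hm)
  rw [show l * m = -l * -m by ring, Real.sqrt_mul (by linarith), le_div_iff₀ (by positivity),
    show 2 * √(-l) * √(-m) * (√(-l) * √(-m)) = 2 * (√(-l) ^ 2 * √(-m) ^ 2) by ring,
    Real.sq_sqrt (by linarith), Real.sq_sqrt (by linarith)]
  nlinarith

end Remainders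

section Spectral

variable {n p : ℕ} {A : Matrix (Fin n) (Fin n) ℝ} {ev : Fin (p + 1) → ℝ}
  {u : Fin (p + 1) → Fin n → ℝ} {c : Fin p → ℝ} {xs : Fin p → Fin n → ℝ}

theorem neg_eigenvalue_le_l2_opNorm (heig : ∀ j, A *ᵥ u j = ev j • u j)
    (hu : ∀ j k, u j ⬝ᵥ u k = if j = k then 1 else 0) (j : Fin (p + 1)) : -ev j ≤ ‖A‖ :=
  (neg_le_abs _).trans (abs_le_l2_opNorm_of_mulVec_eq_smul (heig j) (by simp [hu]))

theorem dotProduct_eq_ite_of_eq_smul (hu : ∀ j k, u j ⬝ᵥ u k = if j = k then 1 else 0)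
    (hxs : ∀ j, xs j = c j • u j.castSucc) (j : Fin p) (k : Fin (p + 1)) :
    xs j ⬝ᵥ u k = if j.castSucc = k then c j else 0 := by
  simp [hxs, smul_dotProduct, hu]

theorem dotProduct_self_of_eq_smul (hu : ∀ j k, u j ⬝ᵥ u k = if j = k then 1 else 0)
    (hxs : ∀ j, xs j = c j • u j.castSucc) (hc : ∀ j, c j * c j = -ev j.castSucc) (j : Fin p) :
    xs j ⬝ᵥ xs j = -ev j.castSucc := by
  conv_lhs => rw [hxs j]
  simp [hu, hc]

theorem dotProduct_eq_zero_of_eq_smul (hu : ∀ j k, u j ⬝ᵥ u k = if j = k then 1 else 0)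
    (hxs : ∀ j, xs j = c j • u j.castSucc) {j k : Fin p} (hjk : j ≠ k) : xs j ⬝ᵥ xs k = 0 := by
  rw [hxs k, dotProduct_smul, dotProduct_eq_ite_of_eq_smul hu hxs,
    if_neg (Fin.castSucc_injective _ |>.ne hjk), smul_zero]

theorem vecEnorm_of_eq_smul (hu : ∀ j k, u j ⬝ᵥ u k = if j = k then 1 else 0)
    (hxs : ∀ j, xs j = c j • u j.castSucc) (hc : ∀ j, c j * c j = -ev j.castSucc) (j : Fin p) :
    vecEnorm (xs j) = √(-ev j.castSucc) := by
  rw [vecEnorm, dotProduct_self_of_eq_smul hu hxs hc]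

theorem mulVec_eq_neg_dotProduct_self_smul (heig : ∀ j, A *ᵥ u j = ev j • u j)
    (hu : ∀ j k, u j ⬝ᵥ u k = if j = k then 1 else 0)
    (hxs : ∀ j, xs j = c j • u j.castSucc) (hc : ∀ j, c j * c j = -ev j.castSucc) (j : Fin p) :
    A *ᵥ xs j = -(xs j ⬝ᵥ xs j) • xs j := by
  rw [dotProduct_self_of_eq_smul hu hxs hc, neg_neg, hxs, mulVec_smul, heig, smul_comm]

theorem exists_triofmJacobian_eigenvalue_mem_Icc (heig : ∀ j, A *ᵥ u j = ev j • u j)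
    (hu : ∀ j k, u j ⬝ᵥ u k = if j = k then 1 else 0)
    (hxs : ∀ j, xs j = c j • u j.castSucc) (hc : ∀ j, c j * c j = -ev j.castSucc)
    (hstrict : StrictMono ev) (hneg : ∀ j, ev j < 0) (i : Fin p) (k : Fin (p + 1)) :
    ∃ μ ∈ Set.Icc (ev i.succ - ev i.castSucc) (2 * ‖A‖),
      triofmJacobian A xs i *ᵥ u k = μ • u k := by
  have hρ := neg_eigenvalue_le_l2_opNorm heig hu
  have hterm : ∀ j, (xs j ⬝ᵥ u k) • xs j = if j.castSucc = k then (-ev k) • u k else 0 := by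
    intro j
    rw [dotProduct_eq_ite_of_eq_smul hu hxs]
    split_ifs with h
    · rw [hxs, smul_smul, hc, h]
    · rw [zero_smul]
  rw [triofmJacobian_mulVec, heig, dotProduct_self_of_eq_smul hu hxs hc,
    dotProduct_eq_ite_of_eq_smul hu hxs, sum_congr rfl fun j _ => hterm j]
  have hgap := hstrict (Fin.castSucc_lt_succ (i := i))
  have hsucc := hneg i.succ
  have hsum_zero : i.castSucc ≤ k →
      ∑ j ∈ univ.filter (· < i), (if j.castSucc = k then (-ev k) • u k else 0) = 0 := fun hik =>
    sum_eq_zero fun j hj => if_neg (ne_of_lt ((Fin.castSucc_lt_castSucc_iff.mpr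
      (by simpa using hj)).trans_le hik))
  rcases lt_trichotomy k i.castSucc with hk | rfl | hk
  · refine ⟨-ev i.castSucc, ⟨by linarith, by linarith [hρ i.castSucc, hneg i.castSucc]⟩, ?_⟩
    obtain ⟨j₀, rfl⟩ : ∃ j₀ : Fin p, j₀.castSucc = k :=
      ⟨k.castPred (Fin.ne_last_of_lt hk), Fin.castSucc_castPred _ _⟩
    rw [if_neg hk.ne', sum_eq_single_of_mem j₀ (by simpa using hk)
      fun j _ hj => if_neg (Fin.castSucc_injective _ |>.ne hj), if_pos rfl]
    module
  · refine ⟨-2 * ev i.castSucc, ⟨by linarith, by linarith [hρ i.castSucc]⟩, ?_⟩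
    rw [if_pos rfl, hsum_zero le_rfl, hxs i, smul_smul, mul_assoc, hc]
    module
  · refine ⟨ev k - ev i.castSucc, ⟨?_, by linarith [hρ i.castSucc, hneg k]⟩, ?_⟩
    · linarith [hstrict.monotone (Fin.castSucc_lt_iff_succ_le.mp hk)]
    · rw [if_neg hk.ne, hsum_zero hk.le]
      module

theorem dotProduct_triofmJacobian_mulVec_mem_Icc_of_orthogonal (heig : ∀ j, A *ᵥ u j = ev j • u j)
    (hu : ∀ j k, u j ⬝ᵥ u k = if j = k then 1 else 0)
    (hxs : ∀ j, xs j = c j • u j.castSucc) (hc : ∀ j, c j * c j = -ev j.castSucc)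
    (hstrict : StrictMono ev)
    (hcourant : ∀ (m : Fin (p + 1)) (v : Fin n → ℝ),
      (∀ j < m, v ⬝ᵥ u j = 0) → ev m * (v ⬝ᵥ v) ≤ v ⬝ᵥ A *ᵥ v)
    (i : Fin p) (w : Fin n → ℝ) (hw : ∀ k, u k ⬝ᵥ w = 0) :
    w ⬝ᵥ triofmJacobian A xs i *ᵥ w
      ∈ Set.Icc ((ev i.succ - ev i.castSucc) * (w ⬝ᵥ w)) (2 * ‖A‖ * (w ⬝ᵥ w)) := by
  have hxw : ∀ j, xs j ⬝ᵥ w = 0 := fun j => by rw [hxs, smul_dotProduct, hw, smul_zero]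
  have hJw : w ⬝ᵥ triofmJacobian A xs i *ᵥ w = w ⬝ᵥ A *ᵥ w - ev i.castSucc * (w ⬝ᵥ w) := by
    simp only [triofmJacobian_mulVec, dotProduct_self_of_eq_smul hu hxs hc, neg_smul, hxw,
      mul_zero, zero_smul, add_zero, sum_const_zero, dotProduct_add, dotProduct_neg,
      dotProduct_smul, smul_eq_mul]
    ring
  have hww : 0 ≤ w ⬝ᵥ w := by rw [← vecEnorm_mul_self]; exact mul_self_nonneg _
  have hlow := hcourant (Fin.last p) w fun j _ => by rw [dotProduct_comm, hw]
  have hlast : ev i.succ ≤ ev (Fin.last p) := hstrict.monotone (Fin.le_last _)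
  have hρ := neg_eigenvalue_le_l2_opNorm heig hu i.castSucc
  rw [hJw]
  constructor
  · nlinarith
  · nlinarith [dotProduct_mulVec_le_l2_opNorm_mul A w]

theorem vecEnorm_one_sub_smul_triofmJacobian_mulVec_le (hA : A.IsSymm)
    (heig : ∀ j, A *ᵥ u j = ev j • u j) (hu : ∀ j k, u j ⬝ᵥ u k = if j = k then 1 else 0)
    (hxs : ∀ j, xs j = c j • u j.castSucc) (hc : ∀ j, c j * c j = -ev j.castSucc)
    (hstrict : StrictMono ev) (hneg : ∀ j, ev j < 0)
    (hcourant : ∀ (m : Fin (p + 1)) (v : Fin n → ℝ),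
      (∀ j < m, v ⬝ᵥ u j = 0) → ev m * (v ⬝ᵥ v) ≤ v ⬝ᵥ A *ᵥ v)
    {α : ℝ} (hα : 0 ≤ α) (hαA : α * ‖A‖ ≤ 2 / 3) (i : Fin p) (e : Fin n → ℝ) :
    vecEnorm ((1 - α • triofmJacobian A xs i) *ᵥ e)
      ≤ (1 - α * (ev i.succ - ev i.castSucc)) * vecEnorm e := by
  have hform := dotProduct_mulVec_mem_Icc_of_eigenvectors (triofmJacobian_isSymm hA xs i) hu
    (exists_triofmJacobian_eigenvalue_mem_Icc heig hu hxs hc hstrict hneg i)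
    (dotProduct_triofmJacobian_mulVec_mem_Icc_of_orthogonal heig hu hxs hc hstrict hcourant i)
  have hgap : ev i.succ - ev i.castSucc ≤ ‖A‖ := by
    linarith [hneg i.succ, neg_eigenvalue_le_l2_opNorm heig hu i.castSucc]
  have hαgap := mul_le_mul_of_nonneg_left hgap hα
  exact vecEnorm_one_sub_smul_mulVec_le (triofmJacobian_isSymm hA xs i) hform hα
    (by linarith) (by linarith) e

end Spectral

theorem stmt11_general {n p : ℕ} (A : Matrix (Fin n) (Fin n) ℝ)
    (hsymm : A.IsSymm)
    (ev : Fin (p + 1) → ℝ) (u : Fin (p + 1) → Fin n → ℝ)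
    (heig : ∀ j, A.mulVec (u j) = ev j • u j)
    (horthonormal : ∀ j k, u j ⬝ᵥ u k = if j = k then (1 : ℝ) else 0)
    (hstrict : StrictMono ev) (hneg : ∀ j, ev j < 0)
    (hcourant : ∀ (m : Fin (p + 1)) (v : Fin n → ℝ),
      (∀ j < m, v ⬝ᵥ u j = 0) → ev m * (v ⬝ᵥ v) ≤ v ⬝ᵥ A.mulVec v)
    (α : ℝ) (hα0 : 0 < α) (hα1 : α < 1 / (4 * ‖A‖))
    (d : Fin p → ℝ) (hd : ∀ j, d j = 1 ∨ d j = -1)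
    (i : Fin p) (x : Fin p → Fin n → ℝ)
    (herr : ∀ j ≤ i,
      vecEnorm (x j - (d j * Real.sqrt (-(ev j.castSucc))) • u j.castSucc)
        ≤ (ev j.succ - ev j.castSucc) / (8 * Real.sqrt (-(ev j.castSucc)))) :
    let xstar : Fin p → Fin n → ℝ :=
      fun j => (d j * Real.sqrt (-(ev j.castSucc))) • u j.castSucc
    vecEnorm ((x i - α • (A.mulVec (x i)
          + ∑ j ∈ Finset.univ.filter (· ≤ i), (x j ⬝ᵥ x i) • x j)) - xstar i)
      ≤ (1 - α * (ev i.succ - ev i.castSucc) / 2) * vecEnorm (x i - xstar i)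
        + α * ∑ j ∈ Finset.univ.filter (· < i),
            (2 * ‖A‖ ^ 2 / Real.sqrt (ev j.castSucc * ev i.castSucc))
              * vecEnorm (x j - xstar j) := by
  intro xstar
  have hxs : ∀ j, xstar j = (d j * √(-ev j.castSucc)) • u j.castSucc := fun _ => rfl
  have hc : ∀ j, d j * √(-ev j.castSucc) * (d j * √(-ev j.castSucc)) = -ev j.castSucc :=
    fun j => by rcases hd j with h | h <;> simp [h, Real.mul_self_sqrt (neg_nonneg.mpr (hneg _).le)]
  have hρ := neg_eigenvalue_le_l2_opNorm heig horthonormal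
  have hαA : α * ‖A‖ ≤ 2 / 3 := by
    rw [lt_div_iff₀ (by linarith [hρ 0, hneg 0])] at hα1
    linarith
  have hnorm := vecEnorm_of_eq_smul horthonormal hxs hc
  have hsmall : ∀ j ≤ i, vecEnorm (x j - xstar j) ≤ √(-ev j.castSucc) / 8 :=
    fun j hj => le_sqrt_neg_div_eight_of_le (hneg _) (hneg _).le (herr j hj)
  have horth : ∀ j < i, xstar j ⬝ᵥ xstar i = 0 :=
    fun j hj => dotProduct_eq_zero_of_eq_smul horthonormal hxs hj.ne
  rw [triofmStep_sub_eq A α xstar x i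
    (mulVec_eq_neg_dotProduct_self_smul heig horthonormal hxs hc i) horth]
  calc _ ≤ _ := vecEnorm_sub_smul_add_sum_le _ _ _ _ hα0.le
    _ ≤ (1 - α * (ev i.succ - ev i.castSucc)) * vecEnorm (x i - xstar i)
        + α * ((ev i.succ - ev i.castSucc) / 2 * vecEnorm (x i - xstar i)
          + ∑ j ∈ univ.filter (· < i),
              2 * ‖A‖ ^ 2 / √(ev j.castSucc * ev i.castSucc) * vecEnorm (x j - xstar j)) := by
        gcongr ?_ + α * (?_ + ∑ j ∈ _, ?_) with j hj
        · exact vecEnorm_one_sub_smul_triofmJacobian_mulVec_le hsymm heig horthonormal hxs hc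
            hstrict hneg hcourant hα0.le hαA i _
        · exact vecEnorm_quadRemainder_le_gap (hneg _) (hneg _).le (hnorm i) (herr i le_rfl)
        · have hji : j < i := by simpa using hj
          exact vecEnorm_crossRemainder_le_of_neg (hneg _) (hneg _) (hρ _) (hρ _) (horth j hji)
            (hnorm j) (hnorm i) (hsmall j hji.le) (hsmall i le_rfl)
    _ = _ := by ring

/-- multi-vec-linear: one-step error propagation for the
`i`-th column of TriOFM-(Obj1).  The eigenvalues `λ₁ < … < λ_{p+1} < 0` are
the smallest of the symmetric matrix `A` (with orthonormal eigenvectors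
`u_j`), the stable fixed point has columns `x*_j = √(-λ_j)d_j u_j`, and
`‖A‖` denotes the spectral norm `ρ`. -/
theorem stmt11 {n p : ℕ} (A : Matrix (Fin n) (Fin n) ℝ)
    (hsymm : A.IsSymm)
    (ev : Fin (p + 1) → ℝ) (u : Fin (p + 1) → Fin n → ℝ)
    (heig : ∀ j, A.mulVec (u j) = ev j • u j)
    (horthonormal : ∀ j k, u j ⬝ᵥ u k = if j = k then (1 : ℝ) else 0)
    (hstrict : StrictMono ev) (hneg : ∀ j, ev j < 0)
    (hcourant : ∀ (m : Fin (p + 1)) (v : Fin n → ℝ),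
      (∀ j < m, v ⬝ᵥ u j = 0) → ev m * (v ⬝ᵥ v) ≤ v ⬝ᵥ A.mulVec v)
    (α : ℝ) (hα0 : 0 < α) (hα1 : α < 1 / (4 * ‖A‖))
    (hα2 : ∀ j : Fin p, α < 1 / (ev j.succ - ev j.castSucc))
    (d : Fin p → ℝ) (hd : ∀ j, d j = 1 ∨ d j = -1)
    (i : Fin p) (x : Fin p → Fin n → ℝ)
    (herr : ∀ j ≤ i,
      vecEnorm (x j - (d j * Real.sqrt (-(ev j.castSucc))) • u j.castSucc)
        ≤ (ev j.succ - ev j.castSucc) / (8 * Real.sqrt (-(ev j.castSucc)))) :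
    let xstar : Fin p → Fin n → ℝ :=
      fun j => (d j * Real.sqrt (-(ev j.castSucc))) • u j.castSucc
    vecEnorm ((x i - α • (A.mulVec (x i)
          + ∑ j ∈ Finset.univ.filter (· ≤ i), (x j ⬝ᵥ x i) • x j)) - xstar i)
      ≤ (1 - α * (ev i.succ - ev i.castSucc) / 2) * vecEnorm (x i - xstar i)
        + α * ∑ j ∈ Finset.univ.filter (· < i),
            (2 * ‖A‖ ^ 2 / Real.sqrt (ev j.castSucc * ev i.castSucc))
              * vecEnorm (x j - xstar j) :=
  stmt11_general A hsymm ev u heig horthonormal hstrict hneg hcourant α hα0 hα1 d hd i x herr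
end

section
/- Let A be symmetric with at least p simple negative smallest eigenvalues. Any two distinct stable fixed points of TriOFM-(Obj1), i.e., distinct matrices of the form U_p√(-Λ_p)D with D diagonal ±1, are at Frobenius distance at least 2√(-λ_p) from each other. -/
open Matrix

/-- Frobenius norm of an `n × p` real matrix. -/
noncomputable def fnorm {n p : ℕ} (M : Matrix (Fin n) (Fin p) ℝ) : ℝ :=
  Real.sqrt (∑ j, ∑ k, (M j k) ^ 2)

/-
The difference of the two fixed points has columns `(d k - d' k) √(-λ_k) u_k`. Since the `u_k`
are unit vectors, its squared Frobenius norm is `∑ k (d k - d' k)² (-λ_k)`. Some `k` has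
`d k ≠ d' k`, so `(d k - d' k)² = 4`, and `-λ_k ≥ -λ_p` by monotonicity.
-/

lemma fnorm_of_unit_columns {n p : ℕ} (c : Fin p → ℝ) (u : Fin p → Fin n → ℝ)
    (hu : ∀ k, u k ⬝ᵥ u k = 1) :
    fnorm (fun j k => c k * u k j : Matrix (Fin n) (Fin p) ℝ) = Real.sqrt (∑ k, c k ^ 2) := by
  unfold fnorm
  rw [Finset.sum_comm]
  congr 1
  refine Finset.sum_congr rfl fun k _ => ?_
  calc ∑ j, (c k * u k j) ^ 2 = c k ^ 2 * (u k ⬝ᵥ u k) := by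
        rw [dotProduct, Finset.mul_sum]
        exact Finset.sum_congr rfl fun j _ => by ring
    _ = c k ^ 2 := by rw [hu k, mul_one]

lemma sub_sq_eq_four_of_sign_ne {a b : ℝ} (ha : a = 1 ∨ a = -1) (hb : b = 1 ∨ b = -1)
    (hab : a ≠ b) : (a - b) ^ 2 = 4 := by
  rcases ha with rfl | rfl <;> rcases hb with rfl | rfl <;> first | exact absurd rfl hab | norm_num

/-- any two distinct stable fixed points `U_p√(-Λ_p)D`,
`U_p√(-Λ_p)D'` of TriOFM-(Obj1) (with `D, D'` diagonal `±1`) are at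
Frobenius distance at least `2√(-λ_p)` from each other. -/
theorem stmt14 {n p : ℕ} (hp : 0 < p)
    (ev : Fin p → ℝ) (u : Fin p → Fin n → ℝ)
    (hmono : Monotone ev) (hneg : ∀ k, ev k < 0)
    (horthonormal : ∀ k l, u k ⬝ᵥ u l = if k = l then (1 : ℝ) else 0)
    (d d' : Fin p → ℝ)
    (hd : ∀ k, d k = 1 ∨ d k = -1) (hd' : ∀ k, d' k = 1 ∨ d' k = -1)
    (hne : d ≠ d') :
    2 * Real.sqrt (-(ev ⟨p - 1, by omega⟩))
      ≤ fnorm ((fun j k => d k * Real.sqrt (-(ev k)) * u k j)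
          - (fun j k => d' k * Real.sqrt (-(ev k)) * u k j)
            : Matrix (Fin n) (Fin p) ℝ) := by
  set c : Fin p → ℝ := fun k => (d k - d' k) * Real.sqrt (-(ev k))
  have hdiff : ((fun j k => d k * Real.sqrt (-(ev k)) * u k j)
      - (fun j k => d' k * Real.sqrt (-(ev k)) * u k j) : Matrix (Fin n) (Fin p) ℝ)
        = fun j k => c k * u k j := by
    ext j k
    change d k * _ * u k j - d' k * _ * u k j = (d k - d' k) * _ * u k j
    ring
  have hc_sq : ∀ k, c k ^ 2 = (d k - d' k) ^ 2 * -ev k := fun k => by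
    rw [mul_pow, Real.sq_sqrt (neg_nonneg.mpr (hneg k).le)]
  obtain ⟨k₀, hk₀⟩ := Function.ne_iff.mp hne
  have hlast : ev k₀ ≤ ev ⟨p - 1, by omega⟩ := hmono (Fin.mk_le_mk.mpr (by omega))
  rw [hdiff, fnorm_of_unit_columns c u fun k => by simpa using horthonormal k k,
    Real.le_sqrt (by positivity) (Finset.sum_nonneg fun k _ => sq_nonneg _)]
  calc (2 * Real.sqrt (-(ev ⟨p - 1, by omega⟩))) ^ 2 = 4 * -ev ⟨p - 1, by omega⟩ := by
        rw [mul_pow, Real.sq_sqrt (neg_nonneg.mpr (hneg _).le)]; norm_num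
    _ ≤ c k₀ ^ 2 := by
        rw [hc_sq, sub_sq_eq_four_of_sign_ne (hd k₀) (hd' k₀) hk₀]; linarith
    _ ≤ ∑ k, c k ^ 2 := Finset.single_le_sum (fun k _ => sq_nonneg (c k)) (Finset.mem_univ k₀)
end

section
/- Let A be symmetric negative definite with A = UΛUᵀ and let X_i = U P_i S_i D_i (P_i first i columns of a permutation, S_i diagonal 0/1, D_i diagonal ±1). If a nonzero vector x satisfies 2Ax - (xᵀx)Ax - (xᵀAx)x - AX_iX_iᵀx - X_iX_iᵀAx = 0, then left-multiplying by X_iᵀ yields D_iS_iP_iᵀ((xᵀx)Λ + (xᵀAx)I)Uᵀx = 0, and since (xᵀx)Λ + (xᵀAx)I is a diagonal matrix with strictly negative entries, it follows that S_iP_iᵀUᵀx = 0, i.e., X_iᵀx = 0 and X_iᵀAx = 0. -/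
open Matrix

/-- induction step in the fixed-point characterization of
TriOFM-(Obj2).  With `A = UΛUᵀ` negative definite and `X_i = U P_i S_i D_i`
(columns `s_k d_k u_{σ(k)}`), any nonzero solution `x` of
`2Ax - (xᵀx)Ax - (xᵀAx)x - AX_iX_iᵀx - X_iX_iᵀAx = 0` satisfies
`D_iS_iP_iᵀ((xᵀx)Λ + (xᵀAx)I)Uᵀx = 0` (the result of left-multiplying by
`X_iᵀ`), hence — since `(xᵀx)Λ + (xᵀAx)I` is diagonal with strictly
negative entries — `S_iP_iᵀUᵀx = 0`, i.e. `X_iᵀx = 0` and `X_iᵀAx = 0`. -/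
theorem stmt17 {n i : ℕ} (A U : Matrix (Fin n) (Fin n) ℝ)
    (ev : Fin n → ℝ)
    (hsymm : A.IsSymm)
    (hdecomp : A = U * Matrix.diagonal ev * Uᵀ)
    (horth : U * Uᵀ = 1)
    (hneg : ∀ j, ev j < 0)
    (σ : Fin i → Fin n) (hσ : Function.Injective σ)
    (s : Fin i → ℝ) (hs : ∀ k, s k = 0 ∨ s k = 1)
    (d : Fin i → ℝ) (hd : ∀ k, d k = 1 ∨ d k = -1)
    (X : Matrix (Fin n) (Fin i) ℝ)
    (hX : ∀ j k, X j k = s k * d k * U j (σ k))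
    (x : Fin n → ℝ) (hx : x ≠ 0)
    (hfix : (2 : ℝ) • A.mulVec x - (x ⬝ᵥ x) • A.mulVec x
        - (x ⬝ᵥ A.mulVec x) • x - (A * (X * Xᵀ)).mulVec x
        - ((X * Xᵀ) * A).mulVec x = 0) :
    (∀ k : Fin i, d k * s k * ((x ⬝ᵥ x) * ev (σ k) + (x ⬝ᵥ A.mulVec x))
        * (Uᵀ.mulVec x (σ k)) = 0)
      ∧ (∀ k : Fin i, s k * (Uᵀ.mulVec x (σ k)) = 0)
      ∧ Xᵀ.mulVec x = 0 ∧ Xᵀ.mulVec (A.mulVec x) = 0 := by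
  classical
  set y : Fin n → ℝ := Uᵀ.mulVec x with hy
  set t : ℝ := x ⬝ᵥ x with ht
  set a : ℝ := x ⬝ᵥ A.mulVec x with ha
  have hUtU : Uᵀ * U = 1 := mul_eq_one_comm.mp horth
  -- E matrix
  set E : Matrix (Fin n) (Fin i) ℝ :=
    Matrix.of (fun p k => if p = σ k then s k * d k else 0) with hE
  have hXE : X = U * E := by
    ext j k
    simp only [hE, Matrix.mul_apply, Matrix.of_apply, hX, mul_ite, mul_zero,
      Finset.sum_ite_eq', Finset.mem_univ, if_true]
    ring
  have hEt : ∀ v : Fin n → ℝ, ∀ k, Eᵀ.mulVec v k = s k * d k * v (σ k) := by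
    intro v k
    simp only [Matrix.mulVec, dotProduct, Matrix.transpose_apply, hE,
      Matrix.of_apply, ite_mul, zero_mul, Finset.sum_ite_eq', Finset.mem_univ, if_true]
  have hEm : ∀ u : Fin i → ℝ, ∀ k, E.mulVec u (σ k) = s k * d k * u k := by
    intro u k
    simp only [Matrix.mulVec, dotProduct, hE, Matrix.of_apply, ite_mul, zero_mul,
      hσ.eq_iff, Finset.sum_ite_eq, Finset.mem_univ, if_true]
  -- x = U y
  have hxUy : x = U.mulVec y := by
    rw [hy, mulVec_mulVec, horth, one_mulVec]
  have hXm : ∀ u : Fin i → ℝ, X.mulVec u = U.mulVec (E.mulVec u) := by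
    intro u; rw [hXE, ← mulVec_mulVec]
  have hmatXU : Xᵀ * U = Eᵀ := by
    rw [hXE, Matrix.transpose_mul, Matrix.mul_assoc, hUtU, Matrix.mul_one]
  have hXtU : ∀ w : Fin n → ℝ, ∀ k, Xᵀ.mulVec (U.mulVec w) k = s k * d k * w (σ k) := by
    intro w k
    rw [mulVec_mulVec, hmatXU]
    exact hEt w k
  have hAU : ∀ w : Fin n → ℝ, A.mulVec (U.mulVec w) = U.mulVec (fun p => ev p * w p) := by
    intro w
    rw [mulVec_mulVec, hdecomp, Matrix.mul_assoc (U * Matrix.diagonal ev), hUtU,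
      Matrix.mul_one]
    ext p
    simp [Matrix.mulVec, dotProduct, Matrix.mul_diagonal, mul_assoc]
  have hAx : A.mulVec x = U.mulVec (fun p => ev p * y p) := by
    calc A.mulVec x = A.mulVec (U.mulVec y) := by rw [← hxUy]
    _ = U.mulVec (fun p => ev p * y p) := hAU y
  -- Xᵀ x
  have hXtx : ∀ k, Xᵀ.mulVec x k = s k * d k * y (σ k) := by
    intro k; rw [hxUy]; exact hXtU y k
  have hXtAx : ∀ k, Xᵀ.mulVec (A.mulVec x) k = s k * d k * (ev (σ k) * y (σ k)) := by
    intro k; rw [hAx]; exact hXtU _ k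
  -- main equation from hfix
  have hmain : ∀ k, (2 : ℝ) * Xᵀ.mulVec (A.mulVec x) k - t * Xᵀ.mulVec (A.mulVec x) k
      - a * Xᵀ.mulVec x k - Xᵀ.mulVec ((A * (X * Xᵀ)).mulVec x) k
      - Xᵀ.mulVec (((X * Xᵀ) * A).mulVec x) k = 0 := by
    intro k
    have h := congrArg (fun v => Xᵀ.mulVec v k) hfix
    simpa [Matrix.mulVec_sub, Matrix.mulVec_smul, Pi.sub_apply, Pi.smul_apply,
      smul_eq_mul, ← ht, ← ha] using h
  -- compute term 4
  have hT4 : ∀ k, Xᵀ.mulVec ((A * (X * Xᵀ)).mulVec x) k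
      = s k * d k * (ev (σ k) * (s k * d k * (s k * d k * y (σ k)))) := by
    intro k
    have h1 : (A * (X * Xᵀ)).mulVec x = A.mulVec (X.mulVec (Xᵀ.mulVec x)) := by
      simp [mulVec_mulVec]
    rw [h1, hXm, hAU, hXtU]
    simp only [hEm, hXtx]
  have hT5 : ∀ k, Xᵀ.mulVec (((X * Xᵀ) * A).mulVec x) k
      = s k * d k * (s k * d k * (s k * d k * (ev (σ k) * y (σ k)))) := by
    intro k
    have h1 : ((X * Xᵀ) * A).mulVec x = X.mulVec (Xᵀ.mulVec (A.mulVec x)) := by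
      simp [mulVec_mulVec, Matrix.mul_assoc]
    rw [h1, hXm, hXtU]
    simp only [hEm, hXtAx]
  -- goal 1
  have g1 : ∀ k, d k * s k * (t * ev (σ k) + a) * y (σ k) = 0 := by
    intro k
    have h := hmain k
    rw [hT4 k, hT5 k, hXtAx k, hXtx k] at h
    rcases hs k with h1 | h1 <;> rcases hd k with h2 | h2 <;>
      rw [h1, h2] at h ⊢ <;>
      first
        | linear_combination -h
        | linear_combination h
  -- positivity facts
  have htpos : 0 < t := by
    rw [ht]
    have hz : x ⬝ᵥ x ≠ 0 := fun h => hx (dotProduct_self_eq_zero.mp h)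
    have hnn : 0 ≤ x ⬝ᵥ x := Finset.sum_nonneg fun j _ => mul_self_nonneg (x j)
    exact lt_of_le_of_ne hnn (Ne.symm hz)
  have hy0 : y ≠ 0 := by
    intro h
    apply hx
    rw [hxUy, h, mulVec_zero]
  have haneg : a < 0 := by
    have hav : a = y ⬝ᵥ fun p => ev p * y p := by
      rw [ha, hAx, Matrix.dotProduct_mulVec, ← Matrix.mulVec_transpose, ← hy]
    rw [hav]
    obtain ⟨p0, hp0⟩ : ∃ p, y p ≠ 0 := by
      by_contra h
      push_neg at h
      exact hy0 (funext h)
    have : ∑ p, y p * (ev p * y p) < ∑ p : Fin n, (0 : ℝ) := by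
      apply Finset.sum_lt_sum
      · intro j _
        nlinarith [sq_nonneg (y j), hneg j]
      · exact ⟨p0, Finset.mem_univ _, by nlinarith [hneg p0, sq_nonneg (y p0), mul_self_pos.mpr hp0]⟩
    simpa [dotProduct] using this
  have hQ : ∀ k, t * ev (σ k) + a < 0 := by
    intro k
    have := mul_pos htpos (neg_pos.mpr (hneg (σ k)))
    nlinarith
  have g2 : ∀ k, s k * y (σ k) = 0 := by
    intro k
    rcases hs k with h1 | h1
    · rw [h1, zero_mul]
    · have h := g1 k
      have hQk : t * ev (σ k) + a ≠ 0 := ne_of_lt (hQ k)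
      have hy' : (t * ev (σ k) + a) * y (σ k) = 0 := by
        rcases hd k with h2 | h2 <;> rw [h1, h2] at h <;>
          first
            | linear_combination h
            | linear_combination -h
      rcases mul_eq_zero.mp hy' with h' | h'
      · exact absurd h' hQk
      · rw [h1, one_mul]; exact h'
  refine ⟨g1, g2, ?_, ?_⟩
  · funext k
    rw [hXtx k, Pi.zero_apply]
    linear_combination d k * g2 k
  · funext k
    rw [hXtAx k, Pi.zero_apply]
    linear_combination d k * ev (σ k) * g2 k
end

section
/- Let A be symmetric negative definite with eigenvalues λ₁ < ... < λ_n < 0 and orthonormal eigenvectors u_i. Suppose X is a fixed point of TriOFM-(Obj2) whose first s-1 columns are ±u₁,...,±u_{s-1} and whose s-th column x_s satisfies x_sᵀu_s = 0 (x_s is zero or a unit eigenvector for an eigenvalue > λ_s). Then the Jacobian diagonal block J_{ss} = 2A - AX_sX_sᵀ - X_sX_sᵀA - Ax_sx_sᵀ - (x_sᵀx_s)A - (x_sᵀAx_s)I - x_sx_sᵀA satisfies u_sᵀJ_{ss}u_s = 2λ_s - (x_sᵀx_s)λ_s - x_sᵀAx_s < 0, so such a fixed point is unstable. -/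
open Matrix Finset

/-!
The eigenvector `u_s` is orthogonal to every column `x_j` with `j ≤ s`: to the earlier ones because
they are `±u_j`, and to `x_s` by assumption. Hence every term of `J_ss` that ends in `X_sᵀ` or
`x_sᵀ` kills `u_s`, and so do the terms `X_s X_sᵀ A` and `x_s x_sᵀ A` since `A u_s = λ_s u_s`.
What remains makes `u_s` an eigenvector of `J_ss` with eigenvalue `2λ_s - ‖x_s‖²λ_s - x_sᵀAx_s`,
which is `2λ_s` if `x_s = 0` and `λ_s - μ` if `x_s` is a unit eigenvector for `μ > λ_s`;
in both cases it is negative.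
-/

namespace Matrix

variable {R ι κ : Type*} [CommRing R] [Fintype ι]

/-- The diagonal block `J_ss` of the Jacobian of TriOFM-(Obj2), with `B = X_s X_sᵀ` and `x = x_s`. -/
def triOFMJacobianBlock [DecidableEq ι] (A B : Matrix ι ι R) (x : ι → R) : Matrix ι ι R :=
  (2 : R) • A - A * B - B * A - A * vecMulVec x x - (x ⬝ᵥ x) • A
    - (x ⬝ᵥ A *ᵥ x) • (1 : Matrix ι ι R) - vecMulVec x x * A

theorem vecMulVec_self_mulVec_of_dotProduct_eq_zero {x v : ι → R} (h : x ⬝ᵥ v = 0) :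
    vecMulVec x x *ᵥ v = 0 := by
  rw [vecMulVec_mulVec, h, MulOpposite.op_zero, zero_smul]

theorem sum_vecMulVec_self_mulVec_of_dotProduct_eq_zero (t : Finset κ) (x : κ → ι → R)
    {v : ι → R} (h : ∀ j ∈ t, x j ⬝ᵥ v = 0) :
    (∑ j ∈ t, vecMulVec (x j) (x j)) *ᵥ v = 0 := by
  rw [sum_mulVec]
  exact sum_eq_zero fun j hj => vecMulVec_self_mulVec_of_dotProduct_eq_zero (h j hj)

theorem triOFMJacobianBlock_mulVec_eigenvector [DecidableEq ι] {A B : Matrix ι ι R}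
    {x v : ι → R} {c : R}
    (hv : A *ᵥ v = c • v) (hB : B *ᵥ v = 0) (hx : x ⬝ᵥ v = 0) :
    triOFMJacobianBlock A B x *ᵥ v = (2 * c - (x ⬝ᵥ x) * c - x ⬝ᵥ A *ᵥ x) • v := by
  have hxx : vecMulVec x x *ᵥ v = 0 := vecMulVec_self_mulVec_of_dotProduct_eq_zero hx
  simp only [triOFMJacobianBlock, sub_mulVec, smul_mulVec, ← mulVec_mulVec, hv, hB, hxx,
    mulVec_smul, mulVec_zero, smul_zero, sub_zero, one_mulVec]
  rw [smul_smul, smul_smul, ← sub_smul, ← sub_smul]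

theorem dotProduct_mulVec_self_of_eigenvector {A : Matrix ι ι R} {x : ι → R} {μ : R}
    (hA : A *ᵥ x = μ • x) (hx : x ⬝ᵥ x = 1) : x ⬝ᵥ A *ᵥ x = μ := by
  rw [hA, dotProduct_smul, hx, smul_eq_mul, mul_one]

end Matrix

theorem stmt18_general {n p : ℕ} (A : Matrix (Fin n) (Fin n) ℝ)
    (u : Fin p → Fin n → ℝ) (ev : Fin p → ℝ)
    (heig : ∀ j, A.mulVec (u j) = ev j • u j)
    (horthonormal : ∀ j k, u j ⬝ᵥ u k = if j = k then (1 : ℝ) else 0)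
    (hneg : ∀ j, ev j < 0)
    (s : Fin p) (x : Fin p → Fin n → ℝ) (d : Fin p → ℝ)
    (hprev : ∀ j < s, x j = d j • u j)
    (hperp : x s ⬝ᵥ u s = 0)
    (hxs : x s = 0 ∨ ∃ μ : ℝ, ev s < μ ∧ μ < 0 ∧
      A.mulVec (x s) = μ • x s ∧ x s ⬝ᵥ x s = 1) :
    let B : Matrix (Fin n) (Fin n) ℝ :=
      ∑ j ∈ Finset.univ.filter (· ≤ s), vecMulVec (x j) (x j)
    let J : Matrix (Fin n) (Fin n) ℝ :=
      (2 : ℝ) • A - A * B - B * A - A * vecMulVec (x s) (x s)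
        - (x s ⬝ᵥ x s) • A
        - (x s ⬝ᵥ A.mulVec (x s)) • (1 : Matrix (Fin n) (Fin n) ℝ)
        - vecMulVec (x s) (x s) * A
    u s ⬝ᵥ J.mulVec (u s)
        = 2 * ev s - (x s ⬝ᵥ x s) * ev s - x s ⬝ᵥ A.mulVec (x s)
      ∧ 2 * ev s - (x s ⬝ᵥ x s) * ev s - x s ⬝ᵥ A.mulVec (x s) < 0
      ∧ ∃ (μ : ℝ) (v : Fin n → ℝ), v ≠ 0 ∧ μ < 0 ∧ J.mulVec v = μ • v := by
  intro B J
  have hus : u s ⬝ᵥ u s = 1 := by simpa using horthonormal s s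
  have hx_perp : ∀ j ∈ univ.filter (· ≤ s), x j ⬝ᵥ u s = 0 := by
    intro j hj
    rcases (mem_filter.1 hj).2.lt_or_eq with hjs | rfl
    · rw [hprev j hjs, smul_dotProduct, horthonormal, if_neg hjs.ne, smul_zero]
    · exact hperp
  have hJu : J *ᵥ u s = (2 * ev s - (x s ⬝ᵥ x s) * ev s - x s ⬝ᵥ A *ᵥ x s) • u s :=
    triOFMJacobianBlock_mulVec_eigenvector (heig s)
      (sum_vecMulVec_self_mulVec_of_dotProduct_eq_zero _ _ hx_perp) hperp
  have hcoeff : 2 * ev s - (x s ⬝ᵥ x s) * ev s - x s ⬝ᵥ A *ᵥ x s < 0 := by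
    rcases hxs with hzero | ⟨μ, hμ, -, hAx, hxx⟩
    · rw [hzero, zero_dotProduct, mulVec_zero, dotProduct_zero]
      linarith [hneg s]
    · rw [hxx, dotProduct_mulVec_self_of_eigenvector hAx hxx]
      linarith
  have hus_ne : u s ≠ 0 := fun h => by simp [h] at hus
  exact ⟨by rw [hJu, dotProduct_smul, hus, smul_eq_mul, mul_one], hcoeff, _, u s, hus_ne,
    hcoeff, hJu⟩

/-- instability of the non-minimal fixed points of
TriOFM-(Obj2).  `A` symmetric negative definite with orthonormal
eigenvectors `u_j` and eigenvalues `λ₁ < … < 0`; the first `s-1` columns of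
the fixed point are `±u_j` and the `s`-th column `x_s` is orthogonal to
`u_s` (zero or a unit eigenvector for an eigenvalue `> λ_s`).  Then the
Jacobian block satisfies `u_sᵀJ_ssu_s = 2λ_s - (x_sᵀx_s)λ_s - x_sᵀAx_s < 0`,
so `J_ss` has a negative eigenvalue and the fixed point is unstable. -/
theorem stmt18 {n p : ℕ} (A : Matrix (Fin n) (Fin n) ℝ)
    (hsymm : A.IsSymm)
    (hnegdef : ∀ v : Fin n → ℝ, v ≠ 0 → v ⬝ᵥ A.mulVec v < 0)
    (u : Fin p → Fin n → ℝ) (ev : Fin p → ℝ)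
    (heig : ∀ j, A.mulVec (u j) = ev j • u j)
    (horthonormal : ∀ j k, u j ⬝ᵥ u k = if j = k then (1 : ℝ) else 0)
    (hstrict : StrictMono ev) (hneg : ∀ j, ev j < 0)
    (s : Fin p) (x : Fin p → Fin n → ℝ) (d : Fin p → ℝ)
    (hd : ∀ j, d j = 1 ∨ d j = -1)
    (hprev : ∀ j < s, x j = d j • u j)
    (hperp : x s ⬝ᵥ u s = 0)
    (hxs : x s = 0 ∨ ∃ μ : ℝ, ev s < μ ∧ μ < 0 ∧
      A.mulVec (x s) = μ • x s ∧ x s ⬝ᵥ x s = 1) :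
    let B : Matrix (Fin n) (Fin n) ℝ :=
      ∑ j ∈ Finset.univ.filter (· ≤ s), vecMulVec (x j) (x j)
    let J : Matrix (Fin n) (Fin n) ℝ :=
      (2 : ℝ) • A - A * B - B * A - A * vecMulVec (x s) (x s)
        - (x s ⬝ᵥ x s) • A
        - (x s ⬝ᵥ A.mulVec (x s)) • (1 : Matrix (Fin n) (Fin n) ℝ)
        - vecMulVec (x s) (x s) * A
    u s ⬝ᵥ J.mulVec (u s)
        = 2 * ev s - (x s ⬝ᵥ x s) * ev s - x s ⬝ᵥ A.mulVec (x s)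
      ∧ 2 * ev s - (x s ⬝ᵥ x s) * ev s - x s ⬝ᵥ A.mulVec (x s) < 0
      ∧ ∃ (μ : ℝ) (v : Fin n → ℝ), v ≠ 0 ∧ μ < 0 ∧ J.mulVec v = μ • v :=
  stmt18_general A u ev heig horthonormal hneg s x d hprev hperp hxs
end

section
/- Let g₁(X) = AX + X triu(XᵀX) for X ∈ ℝ^{n×p}. Then for each i, the i-th column of g₁(X) equals Ax_i + X_iX_iᵀx_i, which depends only on the columns x₁,...,x_i of X. Consequently, for any i ≤ p, running the iteration X^{(t+1)} = X^{(t)} - α g₁(X^{(t)}) on the full matrix and restricting to the first i columns coincides with running the same iteration on the n×i matrix of the first i columns. -/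
open Matrix Finset

/-- Upper triangular part (including the diagonal) of a square matrix. -/
def triu {m : ℕ} (M : Matrix (Fin m) (Fin m) ℝ) : Matrix (Fin m) (Fin m) ℝ :=
  fun i j => if i ≤ j then M i j else 0

/-- The TriOFM-(Obj1) direction `g₁(X) = AX + X·triu(XᵀX)`. -/
def g1 {n m : ℕ} (A : Matrix (Fin n) (Fin n) ℝ) (X : Matrix (Fin n) (Fin m) ℝ) :
    Matrix (Fin n) (Fin m) ℝ :=
  A * X + X * triu (Xᵀ * X)

lemma g1_col {n m : ℕ} (A : Matrix (Fin n) (Fin n) ℝ) (X : Matrix (Fin n) (Fin m) ℝ)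
    (i : Fin m) :
    (fun j => g1 A X j i) = A.mulVec (fun j => X j i)
      + ∑ k ∈ Finset.univ.filter (· ≤ i),
          ((fun j => X j k) ⬝ᵥ (fun j => X j i)) • (fun j => X j k) := by
  funext j
  have h : ∀ f : Fin m → ℝ, (∑ k ∈ Finset.univ.filter (· ≤ i), f k • (fun j => X j k)) j
      = ∑ k ∈ Finset.univ.filter (· ≤ i), f k * X j k := by
    intro f
    simp [Finset.sum_apply]
  simp only [g1, Matrix.add_apply, Pi.add_apply, h, Matrix.mul_apply, Matrix.mulVec,
    Matrix.transpose_apply, triu, dotProduct]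
  rw [Finset.sum_filter]
  congr 1
  refine Finset.sum_congr rfl fun k _ => ?_
  by_cases hk : k ≤ i <;> simp [hk, mul_comm]

lemma g1_col' {n m : ℕ} (A : Matrix (Fin n) (Fin n) ℝ) (X : Matrix (Fin n) (Fin m) ℝ)
    (i : Fin m) (j : Fin n) :
    g1 A X j i = A.mulVec (fun j => X j i) j
      + ∑ k ∈ Finset.univ.filter (· ≤ i),
          ((fun j => X j k) ⬝ᵥ (fun j => X j i)) * X j k := by
  have := congr_fun (g1_col A X i) j
  simpa [Finset.sum_apply] using this

lemma g1_dep {n m : ℕ} (A : Matrix (Fin n) (Fin n) ℝ) (X Y : Matrix (Fin n) (Fin m) ℝ)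
    (i : Fin m) (h : ∀ (j : Fin n) (k : Fin m), k ≤ i → X j k = Y j k) (j : Fin n) :
    g1 A X j i = g1 A Y j i := by
  rw [g1_col', g1_col']
  have hcol : (fun j => X j i) = (fun j => Y j i) := funext fun j => h j i le_rfl
  congr 1
  · rw [hcol]
  · refine Finset.sum_congr rfl fun k hk => ?_
    have hk' : k ≤ i := by simpa using hk
    have hck : (fun j => X j k) = (fun j => Y j k) := funext fun j => h j k hk'
    rw [hcol, hck, h j k hk']

lemma g1_sub {n m p : ℕ} (hmp : m ≤ p) (A : Matrix (Fin n) (Fin n) ℝ)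
    (X : Matrix (Fin n) (Fin p) ℝ) (i : Fin m) (j : Fin n) :
    g1 A (X.submatrix id (Fin.castLE hmp)) j i = g1 A X j (Fin.castLE hmp i) := by
  rw [g1_col', g1_col']
  simp only [Matrix.submatrix_apply, id]
  congr 1
  refine Finset.sum_bij' (fun (k : Fin m) _ => Fin.castLE hmp k)
    (fun (k : Fin p) hk => ⟨k.val, lt_of_le_of_lt
      (Fin.le_def.mp (by simpa using (Finset.mem_filter.mp hk).2)) i.isLt⟩)
    ?_ ?_ ?_ ?_ ?_
  · intro k hk
    have h1 : k ≤ i := (Finset.mem_filter.mp hk).2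
    exact Finset.mem_filter.mpr ⟨Finset.mem_univ _, h1⟩
  · intro k hk
    have h1 : k ≤ Fin.castLE hmp i := (Finset.mem_filter.mp hk).2
    exact Finset.mem_filter.mpr ⟨Finset.mem_univ _, h1⟩
  · intro k hk; rfl
  · intro k hk; exact Fin.ext rfl
  · intro k hk; rfl

/-- column decoupling of TriOFM.  The `i`-th column of
`g₁(X)` equals `Ax_i + X_iX_iᵀx_i` and depends only on the columns
`x₁,…,x_i`; consequently the iteration `X ← X - αg₁(X)` restricted to the
first `i` columns coincides with the same iteration run on the `n×i` matrix
of the first `i` columns. -/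
theorem stmt19 {n p : ℕ} (A : Matrix (Fin n) (Fin n) ℝ) :
    (∀ (X : Matrix (Fin n) (Fin p) ℝ) (i : Fin p),
      (fun j => g1 A X j i) = A.mulVec (fun j => X j i)
        + ∑ k ∈ Finset.univ.filter (· ≤ i),
            ((fun j => X j k) ⬝ᵥ (fun j => X j i)) • (fun j => X j k))
    ∧ (∀ (X Y : Matrix (Fin n) (Fin p) ℝ) (i : Fin p),
      (∀ (j : Fin n) (k : Fin p), k ≤ i → X j k = Y j k) →
        ∀ j, g1 A X j i = g1 A Y j i)
    ∧ (∀ (m : ℕ) (hmp : m ≤ p) (α : ℝ)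
        (Xseq : ℕ → Matrix (Fin n) (Fin p) ℝ)
        (Yseq : ℕ → Matrix (Fin n) (Fin m) ℝ),
      (∀ t, Xseq (t + 1) = Xseq t - α • g1 A (Xseq t)) →
      (∀ t, Yseq (t + 1) = Yseq t - α • g1 A (Yseq t)) →
      Yseq 0 = (Xseq 0).submatrix id (Fin.castLE hmp) →
      ∀ t, Yseq t = (Xseq t).submatrix id (Fin.castLE hmp)) := by
  refine ⟨g1_col A, g1_dep A, ?_⟩
  intro m hmp α Xseq Yseq hX hY h0 t
  induction t with
  | zero => exact h0
  | succ t ih =>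
    rw [hY, hX, ih]
    ext j i
    simp [Matrix.sub_apply, Matrix.smul_apply, Matrix.submatrix_apply, g1_sub hmp A (Xseq t) i j]
end
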